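/- arXiv:1401.1266 — 4 statements merged into one kernel-verified Lean document; each statement's English description precedes it below -/
import Mathlib

section
/- Let A be a c.e. subset of ℕ. If some finite family of c.e. sets generates D(A), then either the empty family generates D(A), or {R} generates D(A) for some infinite computable set R, or {W} generates D(A) for some infinite noncomputable c.e. set W. Moreover, for any c.e. sets D and D', if the singleton family {D} and the singleton family {D'} both generate D(A), then D =* D'. -/
/-!
A finite generating family of `D(A)` may be replaced by the single c.e. set `⋃₀ G`, which
almost contains every c.e. set disjoint from `A`. If this union is finite, every such set is
finite and the empty family already generates; otherwise the union is either computable or not.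
Two singleton generators almost contain each other, hence are equal modulo finite sets.
-/

open Set Function

/-- A set of naturals is computably enumerable (c.e.) -/
def CESet (A : Set ℕ) : Prop := REPred (· ∈ A)

/-- A set of naturals is computable -/
def ComputableSet (A : Set ℕ) : Prop := ComputablePred (· ∈ A)

/-- X ⊆* Y : X is almost contained in Y -/
def SubsetStar (X Y : Set ℕ) : Prop := (X \ Y).Finite

/-- X =* Y : X and Y differ by a finite set -/
def EqStar (X Y : Set ℕ) : Prop := (X \ Y).Finite ∧ (Y \ X).Finite

/-- G is a generating set for 𝒟(A): a countable family of c.e. sets, each disjoint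
from A, such that every c.e. set disjoint from A is almost covered by finitely many
members of G. -/
def Generates (A : Set ℕ) (G : Set (Set ℕ)) : Prop :=
  G.Countable ∧ (∀ X ∈ G, CESet X) ∧ (∀ X ∈ G, Disjoint X A) ∧
  ∀ D : Set ℕ, CESet D → Disjoint D A →
    ∃ F : Set (Set ℕ), F ⊆ G ∧ F.Finite ∧ SubsetStar D (⋃₀ F)

/-- S is simple -/
def SimpleSet (S : Set ℕ) : Prop :=
  CESet S ∧ Sᶜ.Infinite ∧ ∀ W : Set ℕ, CESet W → Disjoint W S → W.Finite

/-- A is 𝒟-maximal -/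
def DMaximal (A : Set ℕ) : Prop :=
  CESet A ∧ ∀ W : Set ℕ, CESet W → ∃ D : Set ℕ, CESet D ∧ Disjoint D A ∧
    (SubsetStar W (A ∪ D) ∨ EqStar (W ∪ A ∪ D) Set.univ)

/-- M is r-maximal -/
def RMaximal (M : Set ℕ) : Prop :=
  CESet M ∧ Mᶜ.Infinite ∧
    ∀ R : Set ℕ, ComputableSet R → (R ∩ Mᶜ).Finite ∨ (Rᶜ ∩ Mᶜ).Finite

/-- M is maximal -/
def MaximalSet (M : Set ℕ) : Prop :=
  CESet M ∧ Mᶜ.Infinite ∧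
    ∀ W : Set ℕ, CESet W → M ⊆ W → (W \ M).Finite ∨ Wᶜ.Finite

/-- B is atomless -/
def AtomlessSet (B : Set ℕ) : Prop :=
  ∀ C : Set ℕ, CESet C → B ⊆ C → Cᶜ.Infinite →
    ∃ E : Set ℕ, CESet E ∧ SubsetStar C E ∧ (E \ C).Infinite ∧ Eᶜ.Infinite

/-- A0, A1 form a Friedberg splitting of A -/
def FriedbergSplitting (A0 A1 A : Set ℕ) : Prop :=
  CESet A0 ∧ CESet A1 ∧ Disjoint A0 A1 ∧ A0 ∪ A1 = A ∧
    ∀ W : Set ℕ, CESet W → ¬ CESet (W \ A) → ¬ CESet (W \ A0) ∧ ¬ CESet (W \ A1)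

/-- E is a major subset of D -/
def MajorIn (E D : Set ℕ) : Prop :=
  CESet E ∧ CESet D ∧ E ⊆ D ∧ (D \ E).Infinite ∧
    ∀ W : Set ℕ, CESet W → SubsetStar Dᶜ W → SubsetStar Eᶜ W

/-- H is hh-simple: the lattice of c.e. supersets of H mod finite is a boolean algebra -/
def HHSimple (H : Set ℕ) : Prop :=
  CESet H ∧ Hᶜ.Infinite ∧
    ∀ W : Set ℕ, CESet W → ∃ V : Set ℕ, CESet V ∧
      EqStar ((W ∪ H) ∩ (V ∪ H)) H ∧ EqStar (W ∪ V ∪ H) Set.univ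

/-- A is strongly r-separable -/
def StronglyRSeparable (A : Set ℕ) : Prop :=
  ∀ B : Set ℕ, CESet B → Disjoint B A →
    ∃ C : Set ℕ, ComputableSet C ∧ B ⊆ C ∧ Disjoint C A ∧ (C \ B).Infinite

/-- Structure of a Type 5 generating family: D0 together with the R_i. -/
def Type5Family (D0 : Set ℕ) (R : ℕ → Set ℕ) : Prop :=
  CESet D0 ∧ ¬ ComputableSet D0 ∧ D0.Infinite ∧
  Function.Injective R ∧ (∀ i, D0 ≠ R i) ∧
  (∀ i, ComputableSet (R i) ∧ (R i).Infinite) ∧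
  Pairwise (Function.onFun Disjoint R) ∧
  (∀ i, Disjoint D0 (R i))

/-- Structure of a Type 7 generating family: D0 together with the R_i. -/
def Type7Family (D0 : Set ℕ) (R : ℕ → Set ℕ) : Prop :=
  CESet D0 ∧ ¬ ComputableSet D0 ∧
  Function.Injective R ∧ (∀ i, D0 ≠ R i) ∧
  (∀ i, ComputableSet (R i) ∧ (R i).Infinite) ∧
  Pairwise (Function.onFun Disjoint R) ∧
  {i : ℕ | (D0 ∩ R i).Nonempty}.Infinite

/-- Structure of a Type 8 generating family: the D_i together with the R_i. -/
def Type8Family (D R : ℕ → Set ℕ) : Prop :=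
  Function.Injective D ∧ Function.Injective R ∧ (∀ i j, D i ≠ R j) ∧
  (∀ i, CESet (D i) ∧ ¬ ComputableSet (D i)) ∧
  Pairwise (Function.onFun Disjoint D) ∧
  (∀ i, ComputableSet (R i) ∧ (R i).Infinite) ∧
  Pairwise (Function.onFun Disjoint R)

/-- Structure of a Type 9 generating family: the nested D_i together with the R_i. -/
def Type9Family (D R : ℕ → Set ℕ) : Prop :=
  Function.Injective R ∧ (∀ i j, D i ≠ R j) ∧
  (∀ i, ComputableSet (R i) ∧ (R i).Infinite) ∧
  Pairwise (Function.onFun Disjoint R) ∧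
  (∀ i, CESet (D i) ∧ ¬ ComputableSet (D i) ∧ (D i).Infinite) ∧
  (∀ l, D l ⊆ D (l + 1)) ∧
  (∀ l, ¬ CESet (D (l + 1) \ D l)) ∧
  (∀ l, {j : ℕ | (R j \ D l).Infinite}.Infinite)

def IsType1 (G : Set (Set ℕ)) : Prop := G = {∅}

def IsType2 (G : Set (Set ℕ)) : Prop :=
  ∃ R : Set ℕ, G = {R} ∧ ComputableSet R ∧ R.Infinite

def IsType3 (G : Set (Set ℕ)) : Prop :=
  ∃ W : Set ℕ, G = {W} ∧ CESet W ∧ ¬ ComputableSet W ∧ W.Infinite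

def IsType4 (G : Set (Set ℕ)) : Prop :=
  ∃ R : ℕ → Set ℕ, G = Set.range R ∧ Function.Injective R ∧
    (∀ i, ComputableSet (R i) ∧ (R i).Infinite) ∧
    Pairwise (Function.onFun Disjoint R)

def IsType5 (G : Set (Set ℕ)) : Prop :=
  ∃ (D0 : Set ℕ) (R : ℕ → Set ℕ), G = insert D0 (Set.range R) ∧ Type5Family D0 R

def IsType6 (G : Set (Set ℕ)) : Prop :=
  ∃ D : ℕ → Set ℕ, G = Set.range D ∧ Function.Injective D ∧
    (∀ i, CESet (D i) ∧ ¬ ComputableSet (D i) ∧ (D i).Infinite) ∧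
    Pairwise (Function.onFun Disjoint D)

def IsType7 (G : Set (Set ℕ)) : Prop :=
  ∃ (D0 : Set ℕ) (R : ℕ → Set ℕ), G = insert D0 (Set.range R) ∧ Type7Family D0 R

def IsType8 (G : Set (Set ℕ)) : Prop :=
  ∃ D R : ℕ → Set ℕ, G = Set.range D ∪ Set.range R ∧ Type8Family D R

def IsType9 (G : Set (Set ℕ)) : Prop :=
  ∃ D R : ℕ → Set ℕ, G = Set.range D ∪ Set.range R ∧ Type9Family D R

def IsType10 (G : Set (Set ℕ)) : Prop :=
  ∃ D : ℕ → Set ℕ, G = Set.range D ∧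
    (∀ i, CESet (D i) ∧ ¬ ComputableSet (D i) ∧ (D i).Infinite) ∧
    (∀ l, D l ⊆ D (l + 1)) ∧
    (∀ l, ¬ CESet (D (l + 1) \ D l))

/-- G is a generating set of Type n (n = 1, …, 10). -/
def GenTypeN (n : ℕ) (G : Set (Set ℕ)) : Prop :=
  match n with
  | 1 => IsType1 G
  | 2 => IsType2 G
  | 3 => IsType3 G
  | 4 => IsType4 G
  | 5 => IsType5 G
  | 6 => IsType6 G
  | 7 => IsType7 G
  | 8 => IsType8 G
  | 9 => IsType9 G
  | 10 => IsType10 G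
  | _ => False

/-- The c.e. set A is of Type n: 𝒟(A) has a generating set of Type n
but no generating set of any Type m < n. -/
def SetOfType (A : Set ℕ) (n : ℕ) : Prop :=
  (∃ G : Set (Set ℕ), Generates A G ∧ GenTypeN n G) ∧
  ∀ m : ℕ, m < n → ¬ ∃ G : Set (Set ℕ), Generates A G ∧ GenTypeN m G

/-- (F_i) is an A-special list. -/
def ASpecialList (A : Set ℕ) (F : ℕ → Set ℕ) : Prop :=
  F 0 = A ∧ (∀ i, CESet (F i) ∧ ¬ ComputableSet (F i)) ∧
  Pairwise (Function.onFun Disjoint F) ∧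
  ∀ W : Set ℕ, CESet W → ∃ i : ℕ,
    SubsetStar W (⋃ l ≤ i, F l) ∨ EqStar (W ∪ ⋃ l ≤ i, F l) Set.univ

theorem REPred.or {α : Type*} [Primcodable α] {p q : α → Prop} (hp : REPred p)
    (hq : REPred q) : REPred fun a => p a ∨ q a := by
  obtain ⟨k, hk, hdom⟩ := Partrec.merge' hp hq
  refine hk.dom_re.of_eq fun a => ?_
  rw [(hdom a).2]
  simp [Part.assert]

theorem CESet.empty : CESet ∅ :=
  ComputablePred.to_re <| ComputablePred.computable_iff.2
    ⟨fun _ => false, Computable.const false, by simp⟩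

theorem CESet.union {X Y : Set ℕ} (hX : CESet X) (hY : CESet Y) : CESet (X ∪ Y) :=
  (REPred.or hX hY).of_eq fun _ => Iff.rfl

theorem CESet.sUnion {G : Set (Set ℕ)} (hG : G.Finite) (h : ∀ X ∈ G, CESet X) :
    CESet (⋃₀ G) := by
  induction G, hG using Set.Finite.induction_on with
  | empty => simpa using CESet.empty
  | insert _ _ ih =>
    rw [sUnion_insert]
    exact (h _ (mem_insert _ _)).union (ih fun X hX => h X (mem_insert_of_mem _ hX))

namespace Generates

variable {A : Set ℕ}

theorem disjoint_sUnion {G : Set (Set ℕ)} (hG : Generates A G) : Disjoint (⋃₀ G) A :=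
  disjoint_sUnion_left.2 hG.2.2.1

theorem subsetStar_sUnion {G : Set (Set ℕ)} (hG : Generates A G) {D : Set ℕ} (hD : CESet D)
    (hDA : Disjoint D A) : SubsetStar D (⋃₀ G) := by
  obtain ⟨F, hFG, -, hDF⟩ := hG.2.2.2 D hD hDA
  exact hDF.subset (sdiff_subset_sdiff_right (sUnion_subset_sUnion hFG))

theorem subsetStar_of_singleton {U : Set ℕ} (hU : Generates A {U}) {D : Set ℕ} (hD : CESet D)
    (hDA : Disjoint D A) : SubsetStar D U := by
  simpa using hU.subsetStar_sUnion hD hDA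

theorem singleton_of_subsetStar {U : Set ℕ} (hU : CESet U) (hUA : Disjoint U A)
    (hcov : ∀ D : Set ℕ, CESet D → Disjoint D A → SubsetStar D U) : Generates A {U} := by
  refine ⟨countable_singleton U, by simpa using hU, by simpa using hUA, fun D hD hDA => ?_⟩
  exact ⟨{U}, Subset.rfl, finite_singleton U, by simpa using hcov D hD hDA⟩

theorem singleton_sUnion {G : Set (Set ℕ)} (hG : Generates A G) (hfin : G.Finite) :
    Generates A {⋃₀ G} :=
  singleton_of_subsetStar (CESet.sUnion hfin hG.2.1) hG.disjoint_sUnion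
    fun _ => hG.subsetStar_sUnion

theorem empty_of_singleton_finite {U : Set ℕ} (hU : Generates A {U}) (hfin : U.Finite) :
    Generates A ∅ := by
  refine ⟨countable_empty, by simp, by simp, fun D hD hDA => ?_⟩
  refine ⟨∅, Subset.rfl, finite_empty, ?_⟩
  simpa [SubsetStar] using (hU.subsetStar_of_singleton hD hDA).of_sdiff hfin

theorem eqStar_of_singleton {D D' : Set ℕ} (hD : Generates A {D}) (hD' : Generates A {D'}) :
    EqStar D D' :=
  ⟨hD'.subsetStar_of_singleton (hD.2.1 D rfl) (hD.2.2.1 D rfl),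
    hD.subsetStar_of_singleton (hD'.2.1 D' rfl) (hD'.2.2.1 D' rfl)⟩

end Generates

theorem stmt_0_general (A : Set ℕ) :
    ((∃ G : Set (Set ℕ), G.Finite ∧ Generates A G) →
      (Generates A ∅ ∨
        (∃ R : Set ℕ, ComputableSet R ∧ R.Infinite ∧ Generates A {R}) ∨
        (∃ W : Set ℕ, CESet W ∧ ¬ ComputableSet W ∧ W.Infinite ∧ Generates A {W}))) ∧
    (∀ D D' : Set ℕ, CESet D → CESet D' → Generates A {D} → Generates A {D'} →
      EqStar D D') := by
  refine ⟨fun ⟨G, hfin, hG⟩ => ?_, fun D D' _ _ hD hD' => hD.eqStar_of_singleton hD'⟩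
  have hU := hG.singleton_sUnion hfin
  by_cases hinf : (⋃₀ G).Infinite
  · by_cases hcomp : ComputableSet (⋃₀ G)
    · exact Or.inr (Or.inl ⟨_, hcomp, hinf, hU⟩)
    · exact Or.inr (Or.inr ⟨_, hU.2.1 _ rfl, hcomp, hinf, hU⟩)
  · exact Or.inl (hU.empty_of_singleton_finite (not_infinite.1 hinf))

theorem stmt_0 (A : Set ℕ) (hA : CESet A) :
    ((∃ G : Set (Set ℕ), G.Finite ∧ Generates A G) →
      (Generates A ∅ ∨
        (∃ R : Set ℕ, ComputableSet R ∧ R.Infinite ∧ Generates A {R}) ∨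
        (∃ W : Set ℕ, CESet W ∧ ¬ ComputableSet W ∧ W.Infinite ∧ Generates A {W}))) ∧
    (∀ D D' : Set ℕ, CESet D → CESet D' → Generates A {D} → Generates A {D'} →
      EqStar D D') :=
  stmt_0_general A
end

section
/- Let A be a c.e. subset of ℕ, let (R_i)_{i∈ℕ} be a family of computable sets, and let G be a countable family of c.e. sets such that {R_i : i ∈ ℕ} ∪ G generates D(A). Then there exists a family (R'_i)_{i∈ℕ} of pairwise disjoint computable sets (some possibly empty) such that {R'_i : i ∈ ℕ} ∪ G generates D(A). -/
open Set Function

/-!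
Replace the computable sets `R i` by their disjointed versions `R i \ ⋃ j < i, R j`. These are
still computable and disjoint from `A`, and each `R i` is covered by the finitely many sets
`disjointed R j`, `j ≤ i`, so every finite subfamily of the old generating set is covered by a
finite subfamily of the new one.
-/

protected theorem ComputablePred.and {α : Type*} [Primcodable α] {p q : α → Prop}
    (hp : ComputablePred p) (hq : ComputablePred q) : ComputablePred fun a => p a ∧ q a := by
  classical
  exact Computable.computablePred <|
    (Primrec.and.to_comp.comp hp.decide hq.decide).of_eq fun a => by simp

theorem ComputableSet.diff {X Y : Set ℕ} (hX : ComputableSet X) (hY : ComputableSet Y) :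
    ComputableSet (X \ Y) :=
  hX.and hY.not

theorem ComputableSet.disjointed {R : ℕ → Set ℕ} (hR : ∀ i, ComputableSet (R i)) (i : ℕ) :
    ComputableSet (disjointed R i) :=
  disjointedRec (fun _ j ht => ht.diff (hR j)) (hR i)

theorem subset_sUnion_image_disjointed_Iic {α : Type*} (R : ℕ → Set α) (i : ℕ) :
    R i ⊆ ⋃₀ (disjointed R '' Iic i) := by
  rw [sUnion_image, ← Finset.coe_Iic, Finset.set_biUnion_coe, biUnion_Iic_disjointed]
  exact le_partialSups R i

theorem Generates.of_forall_subset_sUnion {A : Set ℕ} {G G' : Set (Set ℕ)} (hG : Generates A G)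
    (hcount : G'.Countable) (hce : ∀ X ∈ G', CESet X) (hdisj : ∀ X ∈ G', Disjoint X A)
    (hcover : ∀ X ∈ G, ∃ F ⊆ G', F.Finite ∧ X ⊆ ⋃₀ F) : Generates A G' := by
  refine ⟨hcount, hce, hdisj, fun D hD hDA => ?_⟩
  obtain ⟨F, hFG, hF, hDF⟩ := hG.2.2.2 D hD hDA
  choose! c hcG' hcfin hc using hcover
  refine ⟨⋃ X ∈ F, c X, iUnion₂_subset fun X hX => hcG' X (hFG hX),
    hF.biUnion fun X hX => hcfin X (hFG hX), hDF.subset (sdiff_subset_sdiff_right ?_)⟩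
  exact sUnion_subset fun X hX => (hc X (hFG hX)).trans (sUnion_mono (subset_biUnion_of_mem hX))

theorem stmt_1_general (A : Set ℕ) (R : ℕ → Set ℕ)
    (hR : ∀ i, ComputableSet (R i)) (G : Set (Set ℕ))
    (hgen : Generates A (Set.range R ∪ G)) :
    ∃ R' : ℕ → Set ℕ, (∀ i, ComputableSet (R' i)) ∧
      Pairwise (Function.onFun Disjoint R') ∧
      Generates A (Set.range R' ∪ G) := by
  have ⟨hcount, hce, hdisj, _⟩ := hgen
  refine ⟨disjointed R, ComputableSet.disjointed hR, disjoint_disjointed R,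
    hgen.of_forall_subset_sUnion ?_ ?_ ?_ ?_⟩
  · exact (countable_range _).union (hcount.mono subset_union_right)
  · rintro X (⟨i, rfl⟩ | hX)
    · exact (ComputableSet.disjointed hR i).to_re
    · exact hce X (.inr hX)
  · rintro X (⟨i, rfl⟩ | hX)
    · exact (hdisj (R i) (.inl ⟨i, rfl⟩)).mono_left (disjointed_subset R i)
    · exact hdisj X (.inr hX)
  · rintro X (⟨i, rfl⟩ | hX)
    · exact ⟨_, (image_subset_range _ _).trans subset_union_left, (finite_Iic i).image _,
        subset_sUnion_image_disjointed_Iic R i⟩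
    · exact ⟨{X}, singleton_subset_iff.2 (.inr hX), finite_singleton X,
        (sUnion_singleton X).symm.subset⟩

theorem stmt_1 (A : Set ℕ) (hA : CESet A) (R : ℕ → Set ℕ)
    (hR : ∀ i, ComputableSet (R i)) (G : Set (Set ℕ))
    (hgen : Generates A (Set.range R ∪ G)) :
    ∃ R' : ℕ → Set ℕ, (∀ i, ComputableSet (R' i)) ∧
      Pairwise (Function.onFun Disjoint R') ∧
      Generates A (Set.range R' ∪ G) :=
  stmt_1_general A R hR G hgen
end

section
/- Let A be a c.e. subset of ℕ, let (D_i)_{i∈ℕ} be a family of pairwise disjoint c.e. sets, and let G be a countable family of c.e. sets such that {D_i : i ∈ ℕ} ∪ G generates D(A). Then there exists a family (D'_i)_{i∈ℕ} of pairwise disjoint c.e. sets whose union equals ℕ ∖ A and such that {D'_i : i ∈ ℕ} ∪ G generates D(A). -/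
open Set Function

/-! Pad the disjoint family `D` with the singletons `{a}` of the points `a` lying neither in `A`
nor in any `D i`. The new sets are c.e. because a set with at most one element is c.e. (even though we cannot decide
which case occurs), the family is still pairwise disjoint, it covers exactly `Aᶜ`, and it contains
every `D i`, so any generating set built from the `D i` stays generating. -/

lemma Set.Subsingleton.ceSet {X : Set ℕ} (hX : X.Subsingleton) : CESet X := by
  rcases hX.eq_empty_or_singleton with rfl | ⟨n, rfl⟩
  · exact ComputablePred.to_re ((ComputablePred.computable_iff).2
      ⟨fun _ => false, Computable.const _, by simp⟩)
  · exact ComputablePred.to_re ((ComputablePred.computable_iff).2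
      ⟨fun x => decide (x = n),
        (Primrec.eq.comp Primrec.id (Primrec.const n)).decide.to_comp, by ext; simp⟩)

lemma Generates.mono {A : Set ℕ} {G G' : Set (Set ℕ)} (hG : Generates A G) (hGG' : G ⊆ G')
    (hcount : G'.Countable) (hce : ∀ X ∈ G', CESet X) (hdisj : ∀ X ∈ G', Disjoint X A) :
    Generates A G' := by
  refine ⟨hcount, hce, hdisj, fun W hW hWA => ?_⟩
  obtain ⟨F, hFG, hFfin, hWF⟩ := hG.2.2.2 W hW hWA
  exact ⟨F, hFG.trans hGG', hFfin, hWF⟩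

section complFill

variable {α ι : Type*}

def complFill (A : Set α) (D : ι → Set α) : ι ⊕ α → Set α :=
  Sum.elim D fun a => {a} \ (A ∪ ⋃ i, D i)

lemma range_subset_range_complFill (A : Set α) (D : ι → Set α) :
    range D ⊆ range (complFill A D) :=
  range_comp_subset_range Sum.inl (complFill A D)

lemma pairwise_disjoint_complFill {A : Set α} {D : ι → Set α}
    (hD : Pairwise (Disjoint on D)) : Pairwise (Disjoint on complFill A D) := by
  rintro (i | a) (j | b) hne
  · exact hD fun h => hne (congrArg Sum.inl h)
  · exact disjoint_sdiff_right.mono_left (subset_union_of_subset_right (subset_iUnion D i) A)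
  · exact disjoint_sdiff_left.mono_right (subset_union_of_subset_right (subset_iUnion D j) A)
  · have hab : a ≠ b := fun h => hne (congrArg Sum.inr h)
    exact (disjoint_singleton.2 hab).mono sdiff_subset sdiff_subset

lemma iUnion_complFill {A : Set α} {D : ι → Set α} (hDA : ∀ i, Disjoint (D i) A) :
    ⋃ j, complFill A D j = Aᶜ := by
  refine Subset.antisymm (iUnion_subset ?_) fun a ha => ?_
  · rintro (i | a)
    · exact subset_compl_iff_disjoint_right.2 (hDA i)
    · exact fun _ hx hxA => hx.2 (.inl hxA)
  · by_cases haD : a ∈ ⋃ i, D i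
    · obtain ⟨i, hi⟩ := mem_iUnion.1 haD
      exact mem_iUnion.2 ⟨.inl i, hi⟩
    · exact mem_iUnion.2 ⟨.inr a, rfl, fun h => h.elim ha haD⟩

lemma ceSet_complFill {A : Set ℕ} {D : ι → Set ℕ} (hce : ∀ i, CESet (D i)) :
    ∀ j, CESet (complFill A D j)
  | .inl i => hce i
  | .inr _ => (subsingleton_singleton.anti sdiff_subset).ceSet

end complFill

theorem stmt_4_general (A : Set ℕ) (D : ℕ → Set ℕ)
    (hce : ∀ i, CESet (D i)) (hdisj : Pairwise (Function.onFun Disjoint D))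
    (G : Set (Set ℕ)) (hgen : Generates A (Set.range D ∪ G)) :
    ∃ D' : ℕ → Set ℕ, (∀ i, CESet (D' i)) ∧
      Pairwise (Function.onFun Disjoint D') ∧
      (⋃ i, D' i) = Aᶜ ∧ Generates A (Set.range D' ∪ G) := by
  have hDA : ∀ i, Disjoint (D i) A := fun i => hgen.2.2.1 _ (.inl ⟨i, rfl⟩)
  let e : ℕ ≃ ℕ ⊕ ℕ := Equiv.natSumNatEquivNat.symm
  have hcover : ⋃ k, complFill A D (e k) = Aᶜ := by
    rw [e.surjective.iUnion_comp]
    exact iUnion_complFill hDA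
  have hrange : range (complFill A D ∘ e) = range (complFill A D) := EquivLike.range_comp _ e
  refine ⟨complFill A D ∘ e, fun k => ceSet_complFill hce (e k),
    (pairwise_disjoint_complFill hdisj).comp_of_injective e.injective, hcover, ?_⟩
  refine hgen.mono (union_subset_union_left G (hrange ▸ range_subset_range_complFill A D))
    ((countable_range _).union (hgen.1.mono subset_union_right)) ?_ ?_
  · rintro X (⟨k, rfl⟩ | hX)
    · exact ceSet_complFill hce (e k)
    · exact hgen.2.1 X (.inr hX)
  · rintro X (⟨k, rfl⟩ | hX)
    · exact subset_compl_iff_disjoint_right.1 (hcover ▸ subset_iUnion _ k)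
    · exact hgen.2.2.1 X (.inr hX)

theorem stmt_4 (A : Set ℕ) (hA : CESet A) (D : ℕ → Set ℕ)
    (hce : ∀ i, CESet (D i)) (hdisj : Pairwise (Function.onFun Disjoint D))
    (G : Set (Set ℕ)) (hgen : Generates A (Set.range D ∪ G)) :
    ∃ D' : ℕ → Set ℕ, (∀ i, CESet (D' i)) ∧
      Pairwise (Function.onFun Disjoint D') ∧
      (⋃ i, D' i) = Aᶜ ∧ Generates A (Set.range D' ∪ G) :=
  stmt_4_general A D hce hdisj G hgen
end

section
/- Let A0, A1 be disjoint c.e. subsets of ℕ with A0 ∪ A1 = A, and suppose A0, A1 form a Friedberg splitting of A. If a countable family G of c.e. sets generates D(A), then G ∪ {A1} generates D(A0). -/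
open Set Function

/-!
A c.e. set `D` disjoint from `A0` equals `D \ A0`, so by the Friedberg property `D \ A` is c.e.
and hence almost covered by finitely many members of `G`; the rest of `D` lies in `A1`.
-/

theorem SubsetStar.of_subset_union {X Y Z W : Set ℕ} (hY : SubsetStar Y W) (hX : X ⊆ Y ∪ Z) :
    SubsetStar X (Z ∪ W) :=
  hY.subset fun _ ⟨hxX, hxZW⟩ =>
    (hX hxX).elim (fun hxY => ⟨hxY, fun hxW => hxZW (Or.inr hxW)⟩)
      fun hxZ => (hxZW (Or.inl hxZ)).elim

namespace FriedbergSplitting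

variable {A0 A1 A : Set ℕ}

theorem ceSet_sdiff_of_disjoint (h : FriedbergSplitting A0 A1 A) {D : Set ℕ} (hD : CESet D)
    (hDA0 : Disjoint D A0) : CESet (D \ A) := by
  by_contra hDA
  exact (h.2.2.2.2 D hD hDA).1 (by rwa [hDA0.sdiff_eq_left])

theorem subset_sdiff_union_of_disjoint (h : FriedbergSplitting A0 A1 A) {D : Set ℕ}
    (hDA0 : Disjoint D A0) : D ⊆ D \ A ∪ A1 := by
  intro x hxD
  by_cases hxA : x ∈ A
  · rw [← h.2.2.2.1] at hxA
    exact Or.inr (hxA.resolve_left (Set.disjoint_left.mp hDA0 hxD))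
  · exact Or.inl ⟨hxD, hxA⟩

theorem disjoint_left_of_disjoint (h : FriedbergSplitting A0 A1 A) {X : Set ℕ}
    (hX : Disjoint X A) : Disjoint X A0 :=
  hX.mono_right (h.2.2.2.1 ▸ Set.subset_union_left)

end FriedbergSplitting

theorem stmt_9 (A0 A1 A : Set ℕ) (hsplit : FriedbergSplitting A0 A1 A)
    (G : Set (Set ℕ)) (hgen : Generates A G) :
    Generates A0 (G ∪ {A1}) := by
  obtain ⟨hcnt, hceG, hdisjG, hcover⟩ := hgen
  refine ⟨hcnt.union (Set.countable_singleton _), ?_, ?_, ?_⟩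
  · rintro X (hX | rfl)
    exacts [hceG X hX, hsplit.2.1]
  · rintro X (hX | rfl)
    exacts [hsplit.disjoint_left_of_disjoint (hdisjG X hX), hsplit.2.2.1.symm]
  · intro D hD hDA0
    obtain ⟨F, hFG, hFfin, hDF⟩ :=
      hcover (D \ A) (hsplit.ceSet_sdiff_of_disjoint hD hDA0) Set.disjoint_sdiff_left
    refine ⟨insert A1 F, Set.insert_subset (Or.inr rfl) (hFG.trans Set.subset_union_left),
      hFfin.insert _, ?_⟩
    rw [Set.sUnion_insert]
    exact hDF.of_subset_union (hsplit.subset_sdiff_union_of_disjoint hDA0)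
end
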